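/- Let f : [0,1] → [0,1] be a homeomorphism with NW(f) = Fix(f) = {0, 1}, and let k ≥ 1. Let Â(k) := { {x_1,…,x_k} ∈ [0,1]^{*k} : x_1 < x_2 < … < x_k } be the set of k-point subsets of [0,1] with pairwise distinct elements. Then the polynomial entropy of the induced map f^{*k} on the set Â(k) equals k, i.e. h_pol(f^{*k}; Â(k)) = k. -/

import Mathlib

open Filter Topology TopologicalSpace Set
open scoped ENNReal

/-- The dynamic distance `d_n^f(x,y) = max_{0 ≤ k ≤ n-1} d(f^k x, f^k y)`. -/
noncomputable def dynDist {X : Type*} [MetricSpace X] (f : X → X) (n : ℕ) (x y : X) : ℝ :=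
  ((Finset.range n).sup fun k => nndist (f^[k] x) (f^[k] y) : NNReal)

/-- A finite set `E` is `(n,ε)`-separated for `f`. -/
def IsDynSeparated {X : Type*} [MetricSpace X] (f : X → X) (n : ℕ) (ε : ℝ) (E : Finset X) :
    Prop :=
  ∀ x ∈ E, ∀ y ∈ E, x ≠ y → ε ≤ dynDist f n x y

/-- `S(n,ε;Y)`: the maximal cardinality of an `(n,ε)`-separated subset of `Y`. -/
noncomputable def maxSep {X : Type*} [MetricSpace X] (f : X → X) (Y : Set X) (n : ℕ) (ε : ℝ) :
    ℕ :=
  sSup {m : ℕ | ∃ E : Finset X, ↑E ⊆ Y ∧ E.card = m ∧ IsDynSeparated f n ε E}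

/-- The polynomial entropy `h_pol(f;Y)`.  Since `ε ↦ S(n,ε;Y)` is nonincreasing, the limit as
`ε → 0` of the `limsup` coincides with the supremum over `ε > 0`. -/
noncomputable def polEnt {X : Type*} [MetricSpace X] (f : X → X) (Y : Set X) : ℝ≥0∞ :=
  ⨆ (ε : ℝ) (_ : 0 < ε),
    Filter.atTop.limsup fun n : ℕ =>
      ENNReal.ofReal (Real.log (maxSep f Y n ε) / Real.log n)

/-- The set of non-wandering points of `f`. -/
def nonWandering {X : Type*} [TopologicalSpace X] (f : X → X) : Set X :=
  {p | ∀ U ∈ nhds p, ∃ n : ℕ, 1 ≤ n ∧ (f^[n] '' U ∩ U).Nonempty}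

/-- The induced map `2^f` on the hyperspace of nonempty closed (= compact) subsets of a
compact metric space. -/
noncomputable def induced2 {X : Type*} [TopologicalSpace X] (f : X → X) (hf : Continuous f) :
    NonemptyCompacts X → NonemptyCompacts X :=
  fun A => ⟨⟨f '' A, A.isCompact.image hf⟩, A.nonempty.image f⟩

/-- The hyperspace `C(X)` of subcontinua (nonempty closed connected subsets) of `X`. -/
abbrev Subcontinua (X : Type*) [TopologicalSpace X] :=
  {A : NonemptyCompacts X // IsConnected (A : Set X)}

/-- The induced map `C(f)` on the hyperspace of subcontinua. -/
noncomputable def inducedC {X : Type*} [TopologicalSpace X] (f : X → X) (hf : Continuous f) :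
    Subcontinua X → Subcontinua X :=
  fun A => ⟨induced2 f hf A.1, A.2.image f hf.continuousOn⟩

/-- The `k`-fold symmetric product `X^{*k}`: nonempty subsets of `X` with at most `k` points. -/
abbrev SymProd (X : Type*) [TopologicalSpace X] (k : ℕ) :=
  {A : NonemptyCompacts X // (A : Set X).Finite ∧ (A : Set X).ncard ≤ k}

/-- The induced map `f^{*k}` on the `k`-fold symmetric product. -/
noncomputable def inducedSym {X : Type*} [TopologicalSpace X] (f : X → X) (hf : Continuous f)
    (k : ℕ) : SymProd X k → SymProd X k :=
  fun A => ⟨induced2 f hf A.1, A.2.1.image f, le_trans (Set.ncard_image_le A.2.1) A.2.2⟩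

/-- Sets `U 0, …, U (L-1)` are mutually singular for `f`. -/
def MutuallySingularSets {X : Type*} [TopologicalSpace X] (f : X → X) {L : ℕ}
    (U : Fin L → Set X) : Prop :=
  ∀ M : ℕ, ∃ x : X, ∃ n : Fin L → ℕ, (∀ j, 1 ≤ n j ∧ f^[n j] x ∈ U j) ∧
    ∀ i j, i ≠ j → (M : ℤ) < |(n i : ℤ) - (n j : ℤ)|

/-- A finite set `S ⊆ X \ NW(f)` is singular: it consists of mutually singular points, i.e.
every family of respective neighbourhoods of its points is mutually singular. -/
def IsSingularSet {X : Type*} [TopologicalSpace X] (f : X → X) (S : Set X) : Prop :=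
  S.Finite ∧ (∀ x ∈ S, x ∉ nonWandering f) ∧
  ∀ (L : ℕ) (x : Fin L → X), Function.Injective x → Set.range x = S →
    ∀ U : Fin L → Set X, (∀ j, U j ∈ nhds (x j)) → MutuallySingularSets f U

/-- The set of codings of length-`n` orbit segments of points of `Y` relative to the family
`F`, where the letter `none` stands for `Y_∞ = Y \ ⋃ F`. -/
def codings {X : Type*} (f : X → X) {L : ℕ} (F : Fin L → Set X) (Y : Set X) (n : ℕ) :
    Set (Fin n → Option (Fin L)) :=
  {w | ∃ x ∈ Y, ∀ j : Fin n, match w j with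
    | some i => f^[(j : ℕ)] x ∈ F i
    | none => f^[(j : ℕ)] x ∈ Y \ ⋃ i, F i}

/-- The polynomial entropy of `f` on `Y` relative to the family `F`:
`limsup_n log #A_n(F;Y) / log n`. -/
noncomputable def polEntRel {X : Type*} (f : X → X) {L : ℕ} (F : Fin L → Set X) (Y : Set X) :
    ℝ≥0∞ :=
  Filter.atTop.limsup fun n : ℕ =>
    ENNReal.ofReal (Real.log ((codings f F Y n).ncard) / Real.log n)

/-- The circle is connected. -/
theorem circle_isConnected_univ : IsConnected (Set.univ : Set Circle) := by
  have hsurj : Function.Surjective Circle.exp := fun z => ⟨Complex.arg z, Circle.exp_arg z⟩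
  have : ConnectedSpace Circle :=
    { toPreconnectedSpace := ⟨by
        rw [← Set.image_univ_of_surjective hsurj]
        exact isPreconnected_univ.image _ Circle.exp.continuous.continuousOn⟩,
      toNonempty := ⟨1⟩ }
  exact isConnected_univ

/-!
A homeomorphism of `[0, 1]` fixing `0` is increasing. For a monotone `f` the Birkhoff sum
`φₙ x = ∑_{m<n} fᵐ x` is monotone, so `|φₙ x - φₙ y|` dominates `d(fᵐ x, fᵐ y)` for all `m < n`.
Hence two sets of at most `k` points that can be enumerated with equal codes `⌊φₙ xᵢ / (ε/2)⌋`
are not `(n, ε)`-separated, and `S(n, ε) ≤ (2n/ε + 1)ᵏ`.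

Conversely, the two-sided orbit of a point `a` with `f a ≠ a` is strictly monotone, so it stays
`ε₀`-away from `a`. For every `k`-subset `T ⊆ [0, n)` put `A_T = {f⁻ᵗ a : t ∈ T}`; if
`t ∈ T \ T'`, then `fᵗ A_T` contains `a` while `fᵗ A_T'` stays at distance `≥ ε₀` from `a`.
These `(n choose k)` sets give `S(n, ε₀) ≳ nᵏ`, so both bounds are of order `nᵏ` and
`h_pol = k`.
-/

open Metric unitInterval
open scoped Nat

section DynamicDistance

variable {X : Type*} [MetricSpace X] {f : X → X} {n m : ℕ} {x y : X} {ε : ℝ}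

theorem dist_iterate_le_dynDist (hm : m < n) : dist (f^[m] x) (f^[m] y) ≤ dynDist f n x y := by
  rw [dist_nndist]
  exact_mod_cast Finset.le_sup (f := fun j => nndist (f^[j] x) (f^[j] y)) (Finset.mem_range.2 hm)

theorem dynDist_le {δ : ℝ} (hδ : 0 ≤ δ) (h : ∀ m < n, dist (f^[m] x) (f^[m] y) ≤ δ) :
    dynDist f n x y ≤ δ := by
  have : (Finset.range n).sup (fun j => nndist (f^[j] x) (f^[j] y)) ≤ δ.toNNReal :=
    Finset.sup_le fun j hj => (Real.le_toNNReal_iff_coe_le hδ).2 (h j (Finset.mem_range.1 hj))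
  exact (NNReal.coe_le_coe.2 this).trans (Real.coe_toNNReal _ hδ).le

theorem maxSep_le {Y : Set X} {N : ℕ}
    (h : ∀ E : Finset X, ↑E ⊆ Y → IsDynSeparated f n ε E → E.card ≤ N) : maxSep f Y n ε ≤ N :=
  csSup_le ⟨0, ∅, by simp, rfl, by simp [IsDynSeparated]⟩ (by
    rintro _ ⟨E, hEY, rfl, hE⟩
    exact h E hEY hE)

theorem card_le_maxSep {Y : Set X} {N : ℕ}
    (h : ∀ E : Finset X, ↑E ⊆ Y → IsDynSeparated f n ε E → E.card ≤ N) {E : Finset X}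
    (hEY : ↑E ⊆ Y) (hE : IsDynSeparated f n ε E) : E.card ≤ maxSep f Y n ε :=
  le_csSup ⟨N, by rintro _ ⟨E, hEY, rfl, hE⟩; exact h E hEY hE⟩ ⟨E, hEY, rfl, hE⟩

end DynamicDistance

section Hausdorff

variable {X : Type*} [PseudoMetricSpace X]

theorem hausdorffDist_range_le {ι : Type*} {a b : ι → X} {δ : ℝ} (hδ : 0 ≤ δ)
    (h : ∀ i, dist (a i) (b i) ≤ δ) : hausdorffDist (range a) (range b) ≤ δ :=
  hausdorffDist_le_of_mem_dist hδ (by rintro _ ⟨i, rfl⟩; exact ⟨b i, mem_range_self i, h i⟩)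
    (by rintro _ ⟨i, rfl⟩; exact ⟨a i, mem_range_self i, dist_comm (a i) (b i) ▸ h i⟩)

theorem le_hausdorffDist_of_mem {s t : Set X} (hs : s.Finite) (ht : t.Finite) {x : X}
    (hx : x ∈ s) (hne : t.Nonempty) {r : ℝ} (h : ∀ y ∈ t, r ≤ dist x y) :
    r ≤ hausdorffDist s t :=
  ((le_infDist hne).2 h).trans <| infDist_le_hausdorffDist_of_mem hx <|
    hausdorffEDist_ne_top_of_nonempty_of_bounded ⟨x, hx⟩ hne hs.isBounded ht.isBounded

end Hausdorff

theorem Set.Finite.exists_fin_range_eq {α : Type*} {s : Set α} (hs : s.Finite)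
    (hne : s.Nonempty) {k : ℕ} (hk : s.ncard ≤ k) : ∃ e : Fin k → α, range e = s := by
  obtain ⟨n, g, hg, rfl⟩ := hs.fin_param
  rw [ncard_range_of_injective hg, Nat.card_fin] at hk
  have : Nonempty (Fin n) := range_nonempty_iff_nonempty.1 hne
  exact ⟨g ∘ Function.invFun (Fin.castLE hk),
    (Function.invFun_surjective (Fin.castLE_injective hk)).range_comp g⟩

def SymProd.ofFinset {X : Type*} [TopologicalSpace X] {k : ℕ} (s : Finset X)
    (hs : s.Nonempty) (hk : s.card ≤ k) : SymProd X k :=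
  ⟨⟨⟨s, s.finite_toSet.isCompact⟩, hs⟩, s.finite_toSet,
    show (s : Set X).ncard ≤ k by rwa [ncard_coe_finset]⟩

theorem coe_iterate_inducedSym {X : Type*} [TopologicalSpace X] (f : X → X)
    (hf : Continuous f) (k m : ℕ) (A : SymProd X k) :
    (((inducedSym f hf k)^[m] A).1 : Set X) = f^[m] '' A.1 := by
  induction m with
  | zero => simp
  | succ m ih =>
    rw [Function.iterate_succ_apply', Function.iterate_succ', image_comp, ← ih]
    rfl

theorem dist_iterate_inducedSym {X : Type*} [MetricSpace X] (f : X → X) (hf : Continuous f)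
    (k m : ℕ) (A B : SymProd X k) :
    dist ((inducedSym f hf k)^[m] A) ((inducedSym f hf k)^[m] B) =
      hausdorffDist (f^[m] '' A.1) (f^[m] '' B.1) := by
  rw [Subtype.dist_eq, NonemptyCompacts.dist_eq, coe_iterate_inducedSym,
    coe_iterate_inducedSym]

section UpperBound

theorem abs_sub_lt_of_floor_div_eq {u v δ : ℝ} (hδ : 0 < δ) (hu : 0 ≤ u) (hv : 0 ≤ v)
    (h : ⌊u / δ⌋₊ = ⌊v / δ⌋₊) : |u - v| < δ := by
  have hfloor : ⌊u / δ⌋ = ⌊v / δ⌋ := by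
    rw [← Int.natCast_floor_eq_floor (div_nonneg hu hδ.le),
      ← Int.natCast_floor_eq_floor (div_nonneg hv hδ.le), h]
  have := Int.abs_sub_lt_one_of_floor_eq_floor hfloor
  rwa [← sub_div, abs_div, abs_of_pos hδ, div_lt_one hδ] at this

def orbitSum (F : I → I) (n : ℕ) (x : I) : ℝ :=
  ∑ m ∈ Finset.range n, (F^[m] x : ℝ)

variable {F : I → I} {n m : ℕ}

theorem orbitSum_nonneg (x : I) : 0 ≤ orbitSum F n x :=
  Finset.sum_nonneg fun m _ => (F^[m] x).2.1

theorem orbitSum_le (x : I) : orbitSum F n x ≤ n := by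
  simpa [orbitSum] using Finset.sum_le_sum fun m (_ : m ∈ Finset.range n) => (F^[m] x).2.2

theorem dist_iterate_le_abs_orbitSum_sub (hF : Monotone F) (hm : m < n) (x y : I) :
    dist (F^[m] x) (F^[m] y) ≤ |orbitSum F n x - orbitSum F n y| := by
  wlog hxy : x ≤ y generalizing x y
  · rw [dist_comm, abs_sub_comm]
    exact this y x (le_of_not_ge hxy)
  have hle : ∀ j, (F^[j] x : ℝ) ≤ F^[j] y := fun j => hF.iterate j hxy
  calc dist (F^[m] x) (F^[m] y) = (F^[m] y : ℝ) - F^[m] x := by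
        rw [Subtype.dist_eq, Real.dist_eq, abs_sub_comm, abs_of_nonneg (sub_nonneg.2 (hle m))]
    _ ≤ ∑ j ∈ Finset.range n, ((F^[j] y : ℝ) - F^[j] x) :=
        Finset.single_le_sum (f := fun j => (F^[j] y : ℝ) - F^[j] x)
          (fun j _ => sub_nonneg.2 (hle j)) (Finset.mem_range.2 hm)
    _ = orbitSum F n y - orbitSum F n x := Finset.sum_sub_distrib _ _
    _ ≤ |orbitSum F n x - orbitSum F n y| := by
        rw [abs_sub_comm]
        exact le_abs_self _

theorem card_le_of_isDynSeparated {f : I → I} (hf : Continuous f) (hmono : Monotone f)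
    {k : ℕ} {ε : ℝ} (hε : 0 < ε) {E : Finset (SymProd I k)}
    (hE : IsDynSeparated (inducedSym f hf k) n ε E) : E.card ≤ (⌊2 * n / ε⌋₊ + 1) ^ k := by
  choose e he using fun A : SymProd I k => A.2.1.exists_fin_range_eq A.1.nonempty A.2.2
  let code (A : SymProd I k) (i : Fin k) : ℕ := ⌊orbitSum f n (e A i) / (ε / 2)⌋₊
  have hε2 : 0 < ε / 2 := half_pos hε
  have hcode : ∀ A i, code A i < ⌊2 * n / ε⌋₊ + 1 := fun A i => Nat.lt_succ_of_le <|
    Nat.floor_le_floor <| by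
      rw [div_div_eq_mul_div, div_le_div_iff_of_pos_right hε]
      linarith [orbitSum_le (F := f) (n := n) (e A i)]
  have hinj : Set.InjOn code E := by
    intro A hA B hB hAB
    by_contra hne
    have hclose : dynDist (inducedSym f hf k) n A B ≤ ε / 2 := dynDist_le hε2.le fun m hm => by
      rw [dist_iterate_inducedSym, ← he A, ← he B, ← range_comp, ← range_comp]
      refine hausdorffDist_range_le hε2.le fun i => ?_
      refine (dist_iterate_le_abs_orbitSum_sub hmono hm _ _).trans
        (abs_sub_lt_of_floor_div_eq hε2 (orbitSum_nonneg _) (orbitSum_nonneg _)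
          (congrFun hAB i)).le
    linarith [hE A hA B hB hne]
  calc E.card ≤ (Fintype.piFinset fun _ : Fin k => Finset.range (⌊2 * n / ε⌋₊ + 1)).card :=
        Finset.card_le_card_of_injOn code
          (fun A _ => Fintype.mem_piFinset.2 fun i => Finset.mem_range.2 (hcode A i)) hinj
    _ = (⌊2 * n / ε⌋₊ + 1) ^ k := by simp

end UpperBound

section OrbitSeparation

open Equiv

theorem Equiv.Perm.zpow_add_one_apply {α : Type*} (τ : Perm α) (j : ℤ) (a : α) :
    (τ ^ (j + 1)) a = τ ((τ ^ j) a) := by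
  rw [add_comm, zpow_add, zpow_one, Perm.mul_apply]

theorem Equiv.Perm.iterate_zpow_apply {α : Type*} (τ : Perm α) (m : ℕ) (j : ℤ) (x : α) :
    (⇑τ)^[m] ((τ ^ j) x) = (τ ^ (j + m)) x := by
  rw [Perm.iterate_eq_pow, ← Perm.mul_apply, ← zpow_natCast, ← zpow_add, add_comm]

variable {α : Type*} [LinearOrder α] {τ : Perm α}

theorem lt_apply_zpow_apply_iff (hτ : StrictMono τ) (a : α) (j : ℤ) :
    (τ ^ j) a < τ ((τ ^ j) a) ↔ a < τ a := by
  induction j using Int.induction_on with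
  | zero => simp
  | succ i ih => rw [Perm.zpow_add_one_apply, hτ.lt_iff_lt]; exact ih
  | pred i ih => rw [← hτ.lt_iff_lt, ← Perm.zpow_add_one_apply, sub_add_cancel]; exact ih

theorem strictMono_or_strictAnti_zpow_apply (hτ : StrictMono τ) {a : α} (ha : τ a ≠ a) :
    StrictMono (fun j : ℤ => (τ ^ j) a) ∨ StrictAnti (fun j : ℤ => (τ ^ j) a) := by
  rcases ha.lt_or_gt with h | h
  · refine .inr <| strictAnti_int_of_succ_lt fun j => ?_
    rw [Perm.zpow_add_one_apply]
    exact (lt_apply_zpow_apply_iff (α := αᵒᵈ) hτ.dual a j).2 h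
  · refine .inl <| strictMono_int_of_lt_succ fun j => ?_
    rw [Perm.zpow_add_one_apply]
    exact (lt_apply_zpow_apply_iff hτ a j).2 h

theorem min_abs_sub_le_abs_sub {z : ℤ → ℝ} (hz : StrictMono z ∨ StrictAnti z) {j : ℤ}
    (hj : j ≠ 0) : min |z 1 - z 0| |z (-1) - z 0| ≤ |z j - z 0| := by
  wlog hmono : StrictMono z generalizing z
  · have hneg := (hz.resolve_left hmono).neg
    simpa only [neg_sub_neg, abs_sub_comm (z 0)] using this (.inl hneg) hneg
  rcases hj.lt_or_gt with h | h
  · have h1 : z j ≤ z (-1) := hmono.monotone (by omega)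
    have h2 : z (-1) < z 0 := hmono (by norm_num)
    calc min |z 1 - z 0| |z (-1) - z 0| ≤ |z (-1) - z 0| := min_le_right _ _
      _ ≤ |z j - z 0| := by rw [abs_of_neg (by linarith), abs_of_neg (by linarith)]; linarith
  · have h1 : z 1 ≤ z j := hmono.monotone (by omega)
    have h2 : z 0 < z 1 := hmono (by norm_num)
    calc min |z 1 - z 0| |z (-1) - z 0| ≤ |z 1 - z 0| := min_le_left _ _
      _ ≤ |z j - z 0| := by rw [abs_of_pos (by linarith), abs_of_pos (by linarith)]; linarith

theorem exists_pos_forall_le_dist_zpow_apply {τ : Perm I} (hτ : StrictMono τ) {a : I}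
    (ha : τ a ≠ a) : ∃ ε > 0, ∀ j : ℤ, j ≠ 0 → ε ≤ dist a ((τ ^ j) a) := by
  let z (j : ℤ) : ℝ := (τ ^ j) a
  have hz : StrictMono z ∨ StrictAnti z := (strictMono_or_strictAnti_zpow_apply hτ ha).imp
    (Subtype.strictMono_coe _).comp (Subtype.strictMono_coe _).comp_strictAnti
  have hinj : Function.Injective z := hz.elim StrictMono.injective StrictAnti.injective
  refine ⟨min |z 1 - z 0| |z (-1) - z 0|, lt_min ?_ ?_, fun j hj => ?_⟩
  · exact abs_pos.2 (sub_ne_zero.2 (hinj.ne (by norm_num)))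
  · exact abs_pos.2 (sub_ne_zero.2 (hinj.ne (by norm_num)))
  · calc _ ≤ |z j - z 0| := min_abs_sub_le_abs_sub hz hj
      _ = dist a ((τ ^ j) a) := by simp [z, Subtype.dist_eq, Real.dist_eq, abs_sub_comm]

end OrbitSeparation

section LowerBound

open Equiv

theorem zpow_apply_injective_of_le_dist {X : Type*} [MetricSpace X] {τ : Perm X} {a : X}
    {ε : ℝ} (hε : 0 < ε) (hsep : ∀ j : ℤ, j ≠ 0 → ε ≤ dist a ((τ ^ j) a)) :
    Function.Injective fun j : ℤ => (τ ^ j) a := by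
  intro i j hij
  by_contra hne
  have hfix : (τ ^ (i - j)) a = a := by
    have := congrArg (τ ^ (-j)) hij
    simp only [← Perm.mul_apply, ← zpow_add, neg_add_cancel, zpow_zero, Perm.one_apply] at this
    rwa [neg_add_eq_sub] at this
  have := hsep (i - j) (sub_ne_zero.2 hne)
  rw [hfix, dist_self] at this
  linarith

theorem le_dynDist_inducedSym {X : Type*} [MetricSpace X] {f : X → X} (hf : Continuous f)
    {k n t : ℕ} {A B : SymProd X k} {x : X} {ε : ℝ} (ht : t < n) (hx : x ∈ f^[t] '' A.1)
    (h : ∀ y ∈ B.1, ε ≤ dist x (f^[t] y)) : ε ≤ dynDist (inducedSym f hf k) n A B := by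
  refine le_trans ?_ (dist_iterate_le_dynDist ht)
  rw [dist_iterate_inducedSym]
  exact le_hausdorffDist_of_mem (A.2.1.image _) (B.2.1.image _) hx (B.1.nonempty.image _)
    (by rintro _ ⟨y, hy, rfl⟩; exact h y hy)

theorem exists_isDynSeparated_card_eq_choose {X : Type*} [MetricSpace X] (f : X ≃ₜ X) {a : X}
    {ε : ℝ} (hε : 0 < ε) (hsep : ∀ j : ℤ, j ≠ 0 → ε ≤ dist a ((f.toEquiv ^ j) a)) {k : ℕ}
    (hk : 1 ≤ k) (n : ℕ) :
    ∃ E : Finset (SymProd X k), ↑E ⊆ {A : SymProd X k | (A.1 : Set X).ncard = k} ∧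
      E.card = n.choose k ∧ IsDynSeparated (inducedSym f f.continuous k) n ε E := by
  classical
  let g (t : ℕ) : X := (f.toEquiv ^ (-(t : ℤ))) a
  have hg : Function.Injective g := fun s t hst => by
    simpa using zpow_apply_injective_of_le_dist hε hsep hst
  let P := Finset.powersetCard k (Finset.range n)
  have hP : ∀ T ∈ P, (T.image g).card = k := fun T hT => by
    rw [Finset.card_image_of_injective _ hg, (Finset.mem_powersetCard.1 hT).2]
  let A (T : P) : SymProd X k := SymProd.ofFinset (T.1.image g)
    (Finset.card_pos.1 (by rw [hP T T.2]; omega)) (hP T T.2).le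
  have hA : Function.Injective A := fun T T' hTT' => Subtype.ext <|
    Finset.image_injective hg <| Finset.coe_inj.1 <| congrArg (fun B : SymProd X k => B.1.1.1) hTT'
  refine ⟨P.attach.image A, ?_, ?_, ?_⟩
  · rintro _ hB
    obtain ⟨T, -, rfl⟩ := Finset.mem_image.1 hB
    show (↑(T.1.image g) : Set X).ncard = k
    rw [ncard_coe_finset, hP T T.2]
  · rw [Finset.card_image_of_injective _ hA, Finset.card_attach, Finset.card_powersetCard,
      Finset.card_range]
  · rintro _ hB _ hB' hne
    obtain ⟨T, -, rfl⟩ := Finset.mem_image.1 hB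
    obtain ⟨T', -, rfl⟩ := Finset.mem_image.1 hB'
    have hTT' : T.1 ≠ T'.1 := fun h => hne (congrArg A (Subtype.ext h))
    obtain ⟨t, ht, ht'⟩ := Finset.not_subset.1 fun h => hTT' <|
      Finset.eq_of_subset_of_card_le h (by
        rw [(Finset.mem_powersetCard.1 T.2).2, (Finset.mem_powersetCard.1 T'.2).2])
    have htn : t < n := Finset.mem_range.1 ((Finset.mem_powersetCard.1 T.2).1 ht)
    refine le_dynDist_inducedSym f.continuous (x := a) htn
      ⟨g t, Finset.mem_image_of_mem g ht, ?_⟩ fun y hy => ?_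
    · show (⇑f.toEquiv)^[t] ((f.toEquiv ^ (-(t : ℤ))) a) = a
      rw [Perm.iterate_zpow_apply, neg_add_cancel, zpow_zero, Perm.one_apply]
    · obtain ⟨s, hs, rfl⟩ := Finset.mem_image.1 hy
      show ε ≤ dist a ((⇑f.toEquiv)^[t] ((f.toEquiv ^ (-(s : ℤ))) a))
      have hst : s ≠ t := fun h => ht' (h ▸ hs)
      rw [Perm.iterate_zpow_apply]
      exact hsep _ (by omega)

end LowerBound

section GrowthRate

theorem tendsto_log_mul_pow_div_log {c : ℝ} (hc : 0 < c) (k : ℕ) :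
    Tendsto (fun n : ℕ => Real.log (c * n ^ k) / Real.log n) atTop (𝓝 k) := by
  have hlog : Tendsto (fun n : ℕ => Real.log n) atTop atTop :=
    Real.tendsto_log_atTop.comp tendsto_natCast_atTop_atTop
  have hlim : Tendsto (fun n : ℕ => Real.log c / Real.log n + k) atTop (𝓝 (0 + k)) :=
    (tendsto_const_nhds.div_atTop hlog).add_const _
  rw [zero_add] at hlim
  refine hlim.congr' ?_
  filter_upwards [hlog.eventually_gt_atTop 0, eventually_gt_atTop 0] with n hn hn0
  rw [Real.log_mul hc.ne' (by positivity), Real.log_pow, add_div, mul_div_cancel_right₀ _ hn.ne']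

theorem limsup_log_div_log_le {S : ℕ → ℕ} {C : ℝ} (hC : 1 ≤ C) (k : ℕ)
    (hS : ∀ᶠ n in atTop, (S n : ℝ) ≤ C * n ^ k) :
    atTop.limsup (fun n => ENNReal.ofReal (Real.log (S n) / Real.log n)) ≤ k := by
  have hlim := ENNReal.tendsto_ofReal (tendsto_log_mul_pow_div_log (by linarith) k)
  rw [ENNReal.ofReal_natCast] at hlim
  rw [← hlim.limsup_eq]
  refine limsup_le_limsup ?_
  filter_upwards [hS, eventually_ge_atTop 1] with n hn hn1
  have hCn : 1 ≤ C * n ^ k :=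
    one_le_mul_of_one_le_of_one_le hC (one_le_pow₀ (by exact_mod_cast hn1))
  refine ENNReal.ofReal_le_ofReal (div_le_div_of_nonneg_right ?_ (Real.log_natCast_nonneg n))
  rcases (S n).eq_zero_or_pos with h0 | hpos
  · simpa [h0] using Real.log_nonneg hCn
  · exact Real.log_le_log (by exact_mod_cast hpos) hn

theorem le_limsup_log_div_log {S : ℕ → ℕ} {c : ℝ} (hc : 0 < c) (k : ℕ)
    (hS : ∀ᶠ n in atTop, c * n ^ k ≤ S n) :
    (k : ℝ≥0∞) ≤ atTop.limsup (fun n => ENNReal.ofReal (Real.log (S n) / Real.log n)) := by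
  have hlim := ENNReal.tendsto_ofReal (tendsto_log_mul_pow_div_log hc k)
  rw [ENNReal.ofReal_natCast] at hlim
  rw [← hlim.limsup_eq]
  refine limsup_le_limsup ?_
  filter_upwards [hS, eventually_ge_atTop 1] with n hn hn1
  exact ENNReal.ofReal_le_ofReal (div_le_div_of_nonneg_right
    (Real.log_le_log (by positivity) hn) (Real.log_natCast_nonneg n))

theorem floor_add_one_pow_le {ε : ℝ} (hε : 0 < ε) (k : ℕ) {n : ℕ} (hn : 1 ≤ n) :
    ((⌊2 * n / ε⌋₊ + 1) ^ k : ℕ) ≤ (2 / ε + 1) ^ k * (n : ℝ) ^ k := by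
  have hn' : (1 : ℝ) ≤ n := by exact_mod_cast hn
  rw [← mul_pow]
  push_cast
  refine pow_le_pow_left₀ (by positivity) ?_ k
  calc (⌊2 * n / ε⌋₊ : ℝ) + 1 ≤ 2 * n / ε + 1 := by
        gcongr
        exact Nat.floor_le (by positivity)
    _ ≤ (2 / ε + 1) * n := by
        rw [add_mul, mul_div_right_comm, one_mul]
        linarith

theorem pow_div_le_choose {k n : ℕ} (hn : 2 * k ≤ n) :
    (2 ^ k * k ! : ℝ)⁻¹ * n ^ k ≤ n.choose k := by
  refine le_trans ?_ (Nat.pow_le_choose k n)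
  rw [inv_mul_eq_div, ← div_div, ← div_pow]
  gcongr
  rw [Nat.cast_sub (by omega)]
  push_cast
  have : (2 * k : ℝ) ≤ n := by exact_mod_cast hn
  linarith

end GrowthRate

theorem unitInterval.strictMono_of_map_zero (f : I ≃ₜ I) (h0 : f 0 = 0) : StrictMono f :=
  f.continuous.strictMono_of_inj_boundedOrder
    (by rw [show (⊥ : I) = 0 from rfl, h0]; exact nonneg') f.injective

theorem stmt13_general (f : ↥unitInterval ≃ₜ ↥unitInterval)
    (h01 : Function.fixedPoints ⇑f = {0, 1}) (k : ℕ) (hk : 1 ≤ k) :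
    polEnt (inducedSym ⇑f f.continuous k)
      {A : SymProd ↥unitInterval k | (A.1 : Set ↥unitInterval).ncard = k} = (k : ℝ≥0∞) := by
  have hf : StrictMono f :=
    strictMono_of_map_zero f (show (0 : I) ∈ Function.fixedPoints f from h01 ▸ mem_insert _ _)
  let a : I := ⟨1 / 2, by norm_num, by norm_num⟩
  have ha : f a ≠ a := fun h => by
    have : a ∈ Function.fixedPoints f := h
    rw [h01] at this
    norm_num [a, ← Subtype.coe_inj] at this
  obtain ⟨ε₀, hε₀, hsep⟩ := exists_pos_forall_le_dist_zpow_apply (τ := f.toEquiv) hf ha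
  have hupper : ∀ {ε : ℝ} (hε : 0 < ε) (n : ℕ) (E : Finset (SymProd I k)),
      IsDynSeparated (inducedSym f f.continuous k) n ε E → E.card ≤ (⌊2 * n / ε⌋₊ + 1) ^ k :=
    fun hε _ _ hE => card_le_of_isDynSeparated f.continuous hf.monotone hε hE
  refine le_antisymm (iSup₂_le fun ε hε => ?_) (le_iSup₂_of_le ε₀ hε₀ ?_)
  · refine limsup_log_div_log_le (C := (2 / ε + 1) ^ k)
      (one_le_pow₀ (le_add_of_nonneg_left (by positivity))) k ?_
    filter_upwards [eventually_ge_atTop 1] with n hn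
    exact le_trans (by exact_mod_cast maxSep_le fun E _ => hupper hε n E)
      (floor_add_one_pow_le hε k hn)
  · refine le_limsup_log_div_log (c := (2 ^ k * k ! : ℝ)⁻¹) (by positivity) k ?_
    filter_upwards [eventually_ge_atTop (2 * k)] with n hn
    obtain ⟨E, hEY, hcard, hE⟩ := exists_isDynSeparated_card_eq_choose f hε₀ hsep hk n
    exact (pow_div_le_choose hn).trans
      (Nat.cast_le.2 (hcard ▸ card_le_maxSep (fun E _ => hupper hε₀ n E) hEY hE))

theorem stmt13 (f : ↥unitInterval ≃ₜ ↥unitInterval)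
    (hfix : nonWandering ⇑f = Function.fixedPoints ⇑f)
    (h01 : Function.fixedPoints ⇑f = {0, 1}) (k : ℕ) (hk : 1 ≤ k) :
    polEnt (inducedSym ⇑f f.continuous k)
      {A : SymProd ↥unitInterval k | (A.1 : Set ↥unitInterval).ncard = k} = (k : ℝ≥0∞) :=
  stmt13_general f h01 k hk
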